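/- Assume c(δ) = −1. Then Σ_c = Δ(c); that is, a positive root α with c(α) = 0 satisfies p(α) > p(β⁽¹⁾) + ⋯ + p(β⁽ᵏ⁾) for every decomposition α = β⁽¹⁾ + ⋯ + β⁽ᵏ⁾ with k ≥ 2 and all β⁽ⁱ⁾ ∈ R_c⁺ if and only if α cannot be written as a sum of two elements of R_c⁺. -/

import Mathlib

open Finset

namespace AffineRoots

/-- The vertex set `I = {0,1,…,r}` of the graph. -/
abbrev I (r : ℕ) := Fin (r + 1)

/-- The root lattice `Q = ℤ^I`. -/
abbrev Q (r : ℕ) := I r → ℤ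

variable (r : ℕ)

/-- The standard basis vector (simple root) `e_i` of `Q`. -/
def e (i : I r) : Q r := Pi.single i 1

/-- The Cartan pairing matrix `(e_i, e_j) = 2·[i=j] − a_{ij}` attached to a graph with
`a i j` edges between `i` and `j`. -/
def cartan (a : I r → I r → ℕ) (i j : I r) : ℤ :=
  (if i = j then 2 else 0) - (a i j : ℤ)

/-- The symmetric bilinear form on `Q` determined by the Cartan pairing. -/
def B (a : I r → I r → ℕ) (α β : Q r) : ℤ :=
  ∑ i, ∑ j, α i * cartan r a i j * β j

/-- The reflection `s_i(α) = α − (α,e_i)·e_i`. -/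
def refl (a : I r → I r → ℕ) (i : I r) (α : Q r) : Q r :=
  α - B r a α (e r i) • e r i

/-- The Weyl group `W`: the group of bijections of `Q` generated by the reflections. -/
def W (a : I r → I r → ℕ) : Subgroup (Equiv.Perm (Q r)) :=
  Subgroup.closure {σ | ∃ i : I r, ∀ α, σ α = refl r a i α}

/-- The support of `α` is connected in the graph. -/
def SuppConnected (a : I r → I r → ℕ) (α : Q r) : Prop :=
  ∀ i j : I r, α i ≠ 0 → α j ≠ 0 →
    Relation.ReflTransGen (fun x y => α x ≠ 0 ∧ α y ≠ 0 ∧ 0 < a x y) i j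

/-- The fundamental region `F`: nonzero `α ∈ ℕ^I` with connected support and
`(α,e_i) ≤ 0` for all `i`. -/
def Fund (a : I r → I r → ℕ) : Set (Q r) :=
  {α | α ≠ 0 ∧ (∀ i, 0 ≤ α i) ∧ SuppConnected r a α ∧ ∀ i, B r a α (e r i) ≤ 0}

/-- The real roots: the `W`-orbits of the basis vectors. -/
def RealRoots (a : I r → I r → ℕ) : Set (Q r) :=
  {α | ∃ σ ∈ W r a, ∃ i, α = σ (e r i)}

/-- The imaginary roots: `W·F` and its negative. -/
def ImRoots (a : I r → I r → ℕ) : Set (Q r) :=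
  {α | ∃ σ ∈ W r a, ∃ β ∈ Fund r a, α = σ β ∨ α = -(σ β)}

/-- The root system `R`, consisting of all real and imaginary roots. -/
def Roots (a : I r → I r → ℕ) : Set (Q r) := RealRoots r a ∪ ImRoots r a

/-- The positive roots `R⁺ = R ∩ ℕ^I`. -/
def PosRoots (a : I r → I r → ℕ) : Set (Q r) :=
  {α ∈ Roots r a | ∀ i, 0 ≤ α i}

/-- `R_c = {α ∈ R : c(α) = 0}`. -/
def Rc (a : I r → I r → ℕ) (c : Q r →ₗ[ℤ] ℂ) : Set (Q r) :=
  {α ∈ Roots r a | c α = 0}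

/-- `R_c⁺ = R_c ∩ R⁺`. -/
def RcPos (a : I r → I r → ℕ) (c : Q r →ₗ[ℤ] ℂ) : Set (Q r) :=
  Rc r a c ∩ PosRoots r a

/-- `Δ(c)`: the minimal elements of `R_c⁺`, i.e. those which cannot be written as a sum
of two elements of `R_c⁺`. -/
def Dc (a : I r → I r → ℕ) (c : Q r →ₗ[ℤ] ℂ) : Set (Q r) :=
  {α ∈ RcPos r a c | ¬ ∃ β ∈ RcPos r a c, ∃ γ ∈ RcPos r a c, α = β + γ}

/-- The hypotheses characterizing a simply laced affine Dynkin graph, together with the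
distinguished imaginary root `δ`: the graph (with `a i j` edges between `i` and `j`) is
symmetric, loopless and connected; the Cartan form is positive semidefinite; and the
radical of the form is `ℤδ`, where `δ` has positive coordinates and `δ_0 = 1`. -/
structure AffineData (a : I r → I r → ℕ) (δ : Q r) : Prop where
  symm : ∀ i j, a i j = a j i
  noloops : ∀ i, a i i = 0
  connected : ∀ i j : I r, Relation.ReflTransGen (fun x y => 0 < a x y) i j
  posSemidef : ∀ α : Q r, 0 ≤ B r a α α
  delta_pos : ∀ i, 0 < δ i
  delta_zero : δ 0 = 1
  radical : ∀ α : Q r, (∀ β, B r a α β = 0) ↔ ∃ n : ℤ, α = n • δ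

end AffineRoots

namespace AffineRoots

/-- `p(α) = 1 − (1/2)(α,α)`, valued in `ℚ`. -/
def p (r : ℕ) (a : I r → I r → ℕ) (α : Q r) : ℚ :=
  1 - (B r a α α : ℚ) / 2

/-- `Σ_c`: the set of `α ∈ R_c⁺` such that `p(α) > p(β⁽¹⁾) + ⋯ + p(β⁽ᵏ⁾)` for every
decomposition `α = β⁽¹⁾ + ⋯ + β⁽ᵏ⁾` with `k ≥ 2` and all `β⁽ⁱ⁾ ∈ R_c⁺`. -/
def Sc (r : ℕ) (a : I r → I r → ℕ) (c : Q r →ₗ[ℤ] ℂ) : Set (Q r) :=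
  {α ∈ RcPos r a c |
    ∀ (k : ℕ) (f : Fin k → Q r), 2 ≤ k → (∀ t, f t ∈ RcPos r a c) →
      α = ∑ t, f t → ∑ t, p r a (f t) < p r a α}

end AffineRoots


/-!
Because `c(δ) = -1`, no imaginary root lies in `R_c`: imaginary roots are the nonzero multiples
`nδ` (an element of `F` is isotropic, hence in the radical, and `W` fixes `δ`), and `c(nδ) = -n`.
So `R_c⁺` consists of real roots, on which `(α, α) = 2` and `p(α) = 0`; a two-term decomposition
therefore keeps `α` out of `Σ_c`, and conversely any longer decomposition can be shortened to
one with two terms.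
-/

namespace AffineRoots

section Form

variable {r : ℕ} {a : I r → I r → ℕ}

theorem B_eq_toBilin' (α β : Q r) :
    B r a α β = Matrix.toBilin' (Matrix.of (cartan r a)) α β := by
  rw [Matrix.toBilin'_apply]
  rfl

@[simp]
theorem B_add_left (α β γ : Q r) : B r a (α + β) γ = B r a α γ + B r a β γ := by
  simp [B_eq_toBilin']

@[simp]
theorem B_add_right (α β γ : Q r) : B r a α (β + γ) = B r a α β + B r a α γ := by
  simp [B_eq_toBilin']

@[simp]
theorem B_sub_left (α β γ : Q r) : B r a (α - β) γ = B r a α γ - B r a β γ := by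
  simp [B_eq_toBilin']

@[simp]
theorem B_sub_right (α β γ : Q r) : B r a α (β - γ) = B r a α β - B r a α γ := by
  simp [B_eq_toBilin']

@[simp]
theorem B_smul_left (n : ℤ) (α β : Q r) : B r a (n • α) β = n * B r a α β := by
  simp only [B_eq_toBilin', map_smul, LinearMap.smul_apply, smul_eq_mul]

@[simp]
theorem B_smul_right (n : ℤ) (α β : Q r) : B r a α (n • β) = n * B r a α β := by
  simp only [B_eq_toBilin', map_smul, smul_eq_mul]

theorem B_sum_right {ι : Type*} (s : Finset ι) (α : Q r) (f : ι → Q r) :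
    B r a α (∑ t ∈ s, f t) = ∑ t ∈ s, B r a α (f t) := by
  simp [B_eq_toBilin']

theorem B_e_e (i j : I r) : B r a (e r i) (e r j) = cartan r a i j := by
  rw [B_eq_toBilin', e, e, Matrix.toBilin'_single]
  rfl

theorem B_e_right (α : Q r) (j : I r) : B r a α (e r j) = ∑ i, α i * cartan r a i j := by
  simp [B, e, Pi.single_apply]

theorem B_self_eq_sum (α : Q r) : B r a α α = ∑ j, B r a α (e r j) * α j := by
  simp only [B_e_right, Finset.sum_mul]
  exact Finset.sum_comm

theorem B_symm (hs : ∀ i j, a i j = a j i) (α β : Q r) : B r a α β = B r a β α := by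
  rw [B, Finset.sum_comm]
  refine Finset.sum_congr rfl fun i _ => Finset.sum_congr rfl fun j _ => ?_
  simp only [cartan, hs i j, eq_comm (a := j)]
  ring

theorem B_e_self (hl : ∀ i, a i i = 0) (i : I r) : B r a (e r i) (e r i) = 2 := by
  simp [B_e_e, cartan, hl]

theorem B_eq_zero_of_B_self_eq_zero (hs : ∀ i j, a i j = a j i)
    (hpsd : ∀ α : Q r, 0 ≤ B r a α α) {γ : Q r} (hγ : B r a γ γ = 0) (β : Q r) :
    B r a γ β = 0 := by
  have hline (n : ℤ) : 0 ≤ 2 * n * B r a γ β + B r a β β := by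
    have := hpsd (n • γ + β)
    simp only [B_add_left, B_add_right, B_smul_left, B_smul_right, hγ,
      B_symm hs β γ] at this
    linarith
  by_contra hne
  -- at `n = -(γ, β)((β, β) + 1)` the line would be `≤ -(β, β) - 2 < 0`
  have h := hline (-(B r a γ β) * (B r a β β + 1))
  have hsq : 1 ≤ B r a γ β ^ 2 := by
    rcases lt_or_gt_of_ne hne with h' | h' <;> nlinarith
  nlinarith [hpsd β]

end Form

section Weyl

variable {r : ℕ} {a : I r → I r → ℕ}

theorem refl_involutive (hl : ∀ i, a i i = 0) (i : I r) : Function.Involutive (refl r a i) := by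
  intro α
  simp only [refl, B_sub_left, B_smul_left, B_e_self hl]
  module

theorem B_refl_refl (hs : ∀ i j, a i j = a j i) (hl : ∀ i, a i i = 0) (i : I r) (α β : Q r) :
    B r a (refl r a i α) (refl r a i β) = B r a α β := by
  simp only [refl, B_sub_left, B_sub_right, B_smul_left, B_smul_right, B_e_self hl,
    B_symm hs (e r i) β]
  ring

theorem refl_mem_W (hl : ∀ i, a i i = 0) (i : I r) : (refl_involutive hl i).toPerm ∈ W r a :=
  Subgroup.subset_closure ⟨i, fun _ => rfl⟩

variable (r a) in
def isometryGroup : Subgroup (Equiv.Perm (Q r)) where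
  carrier := {σ | (∀ x y, σ (x + y) = σ x + σ y) ∧ ∀ x y, B r a (σ x) (σ y) = B r a x y}
  mul_mem' := fun ⟨hσa, hσB⟩ ⟨hτa, hτB⟩ =>
    ⟨fun x y => by simp [hσa, hτa], fun x y => by simp [hσB, hτB]⟩
  one_mem' := ⟨fun _ _ => rfl, fun _ _ => rfl⟩
  inv_mem' := fun {σ} ⟨hadd, hB⟩ =>
    ⟨fun x y => σ.injective (by simp [hadd]), fun x y => by rw [← hB]; simp⟩

theorem W_le_isometryGroup (hs : ∀ i j, a i j = a j i) (hl : ∀ i, a i i = 0) :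
    W r a ≤ isometryGroup r a := by
  refine (Subgroup.closure_le _).mpr ?_
  rintro σ ⟨i, hσ⟩
  refine ⟨fun x y => ?_, fun x y => ?_⟩
  · simp only [hσ, refl, B_add_left, add_smul]
    abel
  · rw [hσ, hσ, B_refl_refl hs hl]

theorem W_le_stabilizer {δ : Q r} (hδ : ∀ β, B r a δ β = 0) :
    W r a ≤ MulAction.stabilizer (Equiv.Perm (Q r)) δ := by
  refine (Subgroup.closure_le _).mpr ?_
  rintro σ ⟨i, hσ⟩
  simp [Equiv.Perm.smul_def, hσ, refl, hδ]

section isometryGroup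

variable {σ : Equiv.Perm (Q r)} (hσ : σ ∈ isometryGroup r a)
include hσ

theorem map_sub_of_mem_isometryGroup (x y : Q r) : σ (x - y) = σ x - σ y :=
  map_sub (AddMonoidHom.mk' σ hσ.1) x y

theorem map_zsmul_of_mem_isometryGroup (n : ℤ) (x : Q r) : σ (n • x) = n • σ x :=
  map_zsmul (AddMonoidHom.mk' σ hσ.1) n x

theorem conj_refl_apply (i : I r) (x : Q r) :
    σ (refl r a i (σ⁻¹ x)) = x - B r a x (σ (e r i)) • σ (e r i) := by
  have hB : B r a (σ⁻¹ x) (e r i) = B r a x (σ (e r i)) := by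
    rw [← hσ.2]
    simp
  rw [refl, map_sub_of_mem_isometryGroup hσ, map_zsmul_of_mem_isometryGroup hσ, hB]
  simp

end isometryGroup

theorem B_self_of_mem_realRoots (hs : ∀ i j, a i j = a j i) (hl : ∀ i, a i i = 0) {α : Q r}
    (hα : α ∈ RealRoots r a) : B r a α α = 2 := by
  obtain ⟨σ, hσ, i, rfl⟩ := hα
  rw [(W_le_isometryGroup hs hl hσ).2, B_e_self hl]

theorem sub_B_smul_mem_realRoots (hs : ∀ i j, a i j = a j i) (hl : ∀ i, a i i = 0)
    {α β : Q r} (hα : α ∈ RealRoots r a) (hβ : β ∈ RealRoots r a) :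
    α - B r a α β • β ∈ RealRoots r a := by
  obtain ⟨τ, hτ, j, rfl⟩ := hα
  obtain ⟨σ, hσ, i, rfl⟩ := hβ
  refine ⟨σ * (refl_involutive hl i).toPerm * σ⁻¹ * τ,
    mul_mem (mul_mem (mul_mem hσ (refl_mem_W hl i)) (inv_mem hσ)) hτ, j, ?_⟩
  simp only [Equiv.Perm.mul_apply, Function.Involutive.coe_toPerm]
  rw [conj_refl_apply (W_le_isometryGroup hs hl hσ)]

theorem apply_zsmul_of_mem_W (hs : ∀ i j, a i j = a j i) (hl : ∀ i, a i i = 0) {δ : Q r}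
    (hδ : ∀ β, B r a δ β = 0) {σ : Equiv.Perm (Q r)} (hσ : σ ∈ W r a) (n : ℤ) :
    σ (n • δ) = n • δ := by
  rw [map_zsmul_of_mem_isometryGroup (W_le_isometryGroup hs hl hσ)]
  congr 1
  exact W_le_stabilizer hδ hσ

end Weyl

section Affine

variable {r : ℕ} {a : I r → I r → ℕ} {δ : Q r}

theorem map_zsmul_delta {c : Q r →ₗ[ℤ] ℂ} (hc : c δ = -1) (n : ℤ) : c (n • δ) = -n := by
  rw [map_zsmul, hc, zsmul_eq_mul, mul_neg_one]

variable (hdata : AffineData r a δ)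
include hdata

theorem exists_eq_zsmul_of_B_self_eq_zero {γ : Q r} (hγ : B r a γ γ = 0) :
    ∃ n : ℤ, γ = n • δ :=
  (hdata.radical γ).mp (B_eq_zero_of_B_self_eq_zero hdata.symm hdata.posSemidef hγ)

theorem exists_eq_zsmul_of_mem_ImRoots {α : Q r} (hα : α ∈ ImRoots r a) :
    ∃ n : ℤ, n ≠ 0 ∧ α = n • δ := by
  obtain ⟨σ, hσ, β, ⟨hβ0, hβnonneg, -, hβB⟩, hα⟩ := hα
  have hββ : B r a β β = 0 := by
    refine le_antisymm ?_ (hdata.posSemidef β)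
    rw [B_self_eq_sum]
    exact Finset.sum_nonpos fun j _ => mul_nonpos_of_nonpos_of_nonneg (hβB j) (hβnonneg j)
  obtain ⟨n, rfl⟩ := exists_eq_zsmul_of_B_self_eq_zero hdata hββ
  have hn : n ≠ 0 := by
    rintro rfl
    exact hβ0 (zero_smul _ _)
  have hδ : ∀ β, B r a δ β = 0 := (hdata.radical δ).mpr ⟨1, (one_smul _ _).symm⟩
  rw [apply_zsmul_of_mem_W hdata.symm hdata.noloops hδ hσ] at hα
  rcases hα with rfl | rfl
  · exact ⟨n, hn, rfl⟩
  · exact ⟨-n, neg_ne_zero.mpr hn, (neg_smul _ _).symm⟩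

variable {c : Q r →ₗ[ℤ] ℂ} (hc : c δ = -1)
include hc

theorem eq_zero_of_B_self_eq_zero_of_map_eq_zero {γ : Q r} (hγ : B r a γ γ = 0)
    (hcγ : c γ = 0) : γ = 0 := by
  obtain ⟨n, rfl⟩ := exists_eq_zsmul_of_B_self_eq_zero hdata hγ
  rw [map_zsmul_delta hc, neg_eq_zero, Int.cast_eq_zero] at hcγ
  rw [hcγ, zero_smul]

theorem mem_realRoots_of_mem_RcPos {α : Q r} (hα : α ∈ RcPos r a c) : α ∈ RealRoots r a := by
  obtain ⟨⟨hreal | him, hcα⟩, -⟩ := hα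
  · exact hreal
  · obtain ⟨n, hn, rfl⟩ := exists_eq_zsmul_of_mem_ImRoots hdata him
    rw [map_zsmul_delta hc, neg_eq_zero, Int.cast_eq_zero] at hcα
    exact absurd hcα hn

theorem B_self_of_mem_RcPos {α : Q r} (hα : α ∈ RcPos r a c) : B r a α α = 2 :=
  B_self_of_mem_realRoots hdata.symm hdata.noloops (mem_realRoots_of_mem_RcPos hdata hc hα)

theorem p_eq_zero_of_mem_RcPos {α : Q r} (hα : α ∈ RcPos r a c) : p r a α = 0 := by
  simp [p, B_self_of_mem_RcPos hdata hc hα]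

/-- Since `(α, α) = 2` is the sum of the `(α, f t)`, some summand `β = f t` has `(α, β) ≥ 1`;
semidefiniteness bounds `(α, β) ≤ 2`. Equality would make `α - β` an isotropic vector in
`ker c`, hence zero, leaving the other summands to add up to zero. So `(α, β) = 1` and
`α - β` is the reflection of `α` in `β`, again a root in `R_c⁺`. -/
theorem exists_add_of_eq_sum {α : Q r} (hα : α ∈ RcPos r a c) {k : ℕ} (hk : 2 ≤ k)
    (f : Fin k → Q r) (hf : ∀ t, f t ∈ RcPos r a c) (hsum : α = ∑ t, f t) :
    ∃ β ∈ RcPos r a c, ∃ γ ∈ RcPos r a c, α = β + γ := by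
  obtain ⟨t, -, ht⟩ : ∃ t ∈ univ, (0 : ℤ) < B r a α (f t) := by
    refine Finset.exists_lt_of_sum_lt ?_
    rw [← B_sum_right, ← hsum, B_self_of_mem_RcPos hdata hc hα]
    simp
  set γ := α - f t with hγ
  have hγsum : γ = ∑ s ∈ univ.erase t, f s := by
    rw [hγ, hsum, ← Finset.add_sum_erase _ _ (mem_univ t)]
    abel
  have hγnonneg : 0 ≤ γ := hγsum ▸ Finset.sum_nonneg fun s _ => (hf s).2.2
  have hcγ : c γ = 0 := by simp [γ, hα.1.2, (hf t).1.2]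
  have hγγ : B r a γ γ = 4 - 2 * B r a α (f t) := by
    simp only [γ, B_sub_left, B_sub_right, B_self_of_mem_RcPos hdata hc hα,
      B_self_of_mem_RcPos hdata hc (hf t), B_symm hdata.symm (f t) α]
    ring
  obtain h1 | h2 : B r a α (f t) = 1 ∨ B r a α (f t) = 2 := by
    have := hdata.posSemidef γ
    omega
  · have hγreal : γ ∈ RealRoots r a := by
      simpa [h1] using sub_B_smul_mem_realRoots hdata.symm hdata.noloops
        (mem_realRoots_of_mem_RcPos hdata hc hα) (mem_realRoots_of_mem_RcPos hdata hc (hf t))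
    exact ⟨f t, hf t, γ, ⟨⟨Or.inl hγreal, hcγ⟩, Or.inl hγreal, hγnonneg⟩,
      (add_sub_cancel (f t) α).symm⟩
  · have hγ0 : γ = 0 := eq_zero_of_B_self_eq_zero_of_map_eq_zero hdata hc (by omega) hcγ
    obtain ⟨s, hs, hst⟩ := Finset.exists_mem_ne (s := univ) (by simp; omega) t
    have hfs : f s = 0 :=
      (Finset.sum_eq_zero_iff_of_nonneg fun s _ => (hf s).2.2).mp (hγsum ▸ hγ0) s
        (Finset.mem_erase.mpr ⟨hst, hs⟩)
    have := B_self_of_mem_RcPos hdata hc (hf s)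
    simp [hfs, B] at this

end Affine

end AffineRoots

open AffineRoots in
/-- Assume `c(δ) = −1`.  Then `Σ_c = Δ(c)`; that is, a positive root `α` with `c(α) = 0`
satisfies `p(α) > p(β⁽¹⁾) + ⋯ + p(β⁽ᵏ⁾)` for every decomposition `α = β⁽¹⁾ + ⋯ + β⁽ᵏ⁾`
with `k ≥ 2` and all `β⁽ⁱ⁾ ∈ R_c⁺` if and only if `α` cannot be written as a sum of two
elements of `R_c⁺`. -/
theorem Sc_eq_Dc (r : ℕ) (a : I r → I r → ℕ) (δ : Q r)
    (hdata : AffineData r a δ) (c : Q r →ₗ[ℤ] ℂ) (hc : c δ = -1) :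
    Sc r a c = Dc r a c := by
  ext α
  refine ⟨fun ⟨hα, hSc⟩ => ⟨hα, ?_⟩, fun ⟨hα, hDc⟩ => ⟨hα, fun k f hk hf hsum => ?_⟩⟩
  · rintro ⟨β, hβ, γ, hγ, rfl⟩
    have h := hSc 2 ![β, γ] le_rfl (Fin.forall_fin_two.mpr ⟨hβ, hγ⟩) (by simp)
    simp [p_eq_zero_of_mem_RcPos hdata hc, hα, hβ, hγ] at h
  · exact (hDc (exists_add_of_eq_sum hdata hc hα hk f hf hsum)).elim
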